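/- Let X be a real Hilbert space, x₀ ∈ X, r₀ > 0, Y a Banach space, and let f : B(x₀; r₀) → Y be a C¹ map such that f'(x) is a continuous linear isomorphism of X onto Y for every x ∈ B(x₀; r₀). Let (D_Φ, Φ) be the maximal auxiliary flow for f at x₀, and assume condition (c): for every closed set B bounded in B(x₀; r₀) and every x ∈ B, if Φ(x,t) ∈ B for all t ≥ 0 with (x,t) ∈ D_Φ, then [0,∞) ⊆ I_x. Then the following two conditions are equivalent: (a) f is injective on B(x₀; r₀) and f(B(x₀; r)) is star-shaped with respect to f(x₀) for every 0 < r ≤ r₀; (b) ⟨x − x₀, f'(x)⁻¹(f(x) − f(x₀))⟩ ≥ 0 for all x ∈ B(x₀; r₀), where ⟨·,·⟩ is the inner product of X. -/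

import Mathlib

/-!
(b) ⇒ (a). Along the auxiliary flow, `‖Φ(x,t) - x₀‖²` has derivative
`-2⟨Φ - x₀, f'(Φ)⁻¹(f(Φ) - f(x₀))⟩ ≤ 0`, so a trajectory stays in the closed ball through its
starting point, and condition (c) makes it exist for all `t ≥ 0`. As
`f(Φ(x,t)) = f(x₀) + e^{-t}(f(x) - f(x₀))`, star-shapedness of `f(B(x₀;r))` follows at once. For
injectivity, take a local inverse `g` of `f` near `x₀` and the small neighbourhood `W` of `x₀` on
which it acts. The set of points whose trajectory meets `W` is open, and it is relatively closed in
the ball because, once `f(Φ(x,t))` is close to `f(x₀)`, a trajectory cannot cross a small sphere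
around `x₀`. By connectedness every trajectory enters `W` and then stays near `x₀`, where `g`
inverts `f`; two points with the same image reach the same point at a common time, and running the
flow backwards identifies them.

(a) ⇒ (b). Lifting the segment from `f(x₀)` to `f(x)` through the local inverse of `f` at `x` gives
a curve `z` with `z(1) = x`; by injectivity and star-shapedness `‖z(s) - x₀‖ ≤ ‖x - x₀‖` for
`s ≤ 1`, so the derivative `2⟨x - x₀, f'(x)⁻¹(f(x) - f(x₀))⟩` of `‖z(s) - x₀‖²` at `s = 1` is
nonnegative.
-/

open Set Filter

/-- `f : D → Y` is a local homeomorphism on the open set `D` if every point of `D` has an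
open neighbourhood `U ⊆ D` such that `f(U)` is open and `f|U : U → f(U)` is a
homeomorphism. -/
def IsLocalHomeoOn {X Y : Type*} [TopologicalSpace X] [TopologicalSpace Y]
    (f : X → Y) (D : Set X) : Prop :=
  ∀ x ∈ D, ∃ U : Set X, U ⊆ D ∧ IsOpen U ∧ x ∈ U ∧ IsOpen (f '' U) ∧
    ContinuousOn f U ∧ ∃ g : Y → X, ContinuousOn g (f '' U) ∧
      (∀ u ∈ U, g (f u) = u) ∧ ∀ y ∈ f '' U, g y ∈ U ∧ f (g y) = y

/-- The maximal auxiliary flow `Φ : D_Φ → D` for a map `f : D → Y` at the point `x₀`: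
`D_Φ ⊆ D × ℝ` is open, each section `I_x = {t : (x,t) ∈ D_Φ}` is an interval containing
`0`, `Φ(x,0) = x`, the flow law `Φ(Φ(x,t₁),t₂) = Φ(x,t₁+t₂)` holds,
`f(Φ(x,t)) = f(x₀) + e^{-t}(f(x) - f(x₀))` on `D_Φ`, and `Φ` is maximal among such
liftings. -/
structure AuxFlow {X Y : Type*} [NormedAddCommGroup X] [NormedSpace ℝ X]
    [NormedAddCommGroup Y] [NormedSpace ℝ Y]
    (D : Set X) (f : X → Y) (x₀ : X) where
  dom : Set (X × ℝ)
  flow : X → ℝ → X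
  isOpen_dom : IsOpen dom
  dom_subset : ∀ p ∈ dom, p.1 ∈ D
  zero_mem : ∀ x ∈ D, (x, (0 : ℝ)) ∈ dom
  interval : ∀ x ∈ D, Set.OrdConnected {t : ℝ | (x, t) ∈ dom}
  mem_of_dom : ∀ p ∈ dom, flow p.1 p.2 ∈ D
  continuousOn : ContinuousOn (fun p : X × ℝ => flow p.1 p.2) dom
  flow_zero : ∀ x ∈ D, flow x 0 = x
  flow_add : ∀ (x : X) (t₁ t₂ : ℝ), (x, t₁) ∈ dom → (x, t₁ + t₂) ∈ dom →
    (flow x t₁, t₂) ∈ dom ∧ flow (flow x t₁) t₂ = flow x (t₁ + t₂)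
  lifts : ∀ p ∈ dom, f (flow p.1 p.2) = f x₀ + Real.exp (-p.2) • (f p.1 - f x₀)
  maximal : ∀ x ∈ D, ∀ J : Set ℝ, J.OrdConnected → (0 : ℝ) ∈ J →
    ∀ ψ : ℝ → X, ContinuousOn ψ J → ψ 0 = x →
    (∀ t ∈ J, ψ t ∈ D ∧ f (ψ t) = f x₀ + Real.exp (-t) • (f x - f x₀)) →
    ∀ t ∈ J, (x, t) ∈ dom ∧ ψ t = flow x t

open Metric Topology

theorem HasDerivAt.nonneg_of_eventually_nhdsLT_le {φ : ℝ → ℝ} {φ' a : ℝ}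
    (hφ : HasDerivAt φ φ' a) (hle : ∀ᶠ s in 𝓝[<] a, φ s ≤ φ a) : 0 ≤ φ' := by
  refine ge_of_tendsto (hasDerivAt_iff_tendsto_slope_left_right.mp hφ).1 ?_
  filter_upwards [hle, self_mem_nhdsWithin] with s hs hsa
  rw [slope_def_field]
  exact div_nonneg_of_nonpos (sub_nonpos.mpr hs) (sub_nonpos.mpr (le_of_lt hsa))

section LocalInverse

variable {X Y : Type*}

structure IsLocalInverseOnBalls [PseudoMetricSpace X] [PseudoMetricSpace Y]
    (f : X → Y) (g : Y → X) (x₀ : X) (ε η : ℝ) : Prop where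
  ε_pos : 0 < ε
  η_pos : 0 < η
  left_inv : ∀ x ∈ ball x₀ ε, g (f x) = x
  right_inv : ∀ y ∈ ball (f x₀) η, f (g y) = y
  mapsTo : MapsTo g (ball (f x₀) η) (ball x₀ (ε / 2))
  continuousOn : ContinuousOn g (ball (f x₀) η)

variable [NormedAddCommGroup X] [NormedSpace ℝ X] [CompleteSpace X]
  [NormedAddCommGroup Y] [NormedSpace ℝ Y] {f : X → Y} {f' : X ≃L[ℝ] Y}

theorem HasStrictFDerivAt.exists_isLocalInverseOnBalls {x₀ : X} {D : Set X}
    (hf : HasStrictFDerivAt f (f' : X →L[ℝ] Y) x₀) (hD : D ∈ 𝓝 x₀) :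
    ∃ ε η : ℝ, ∃ g : Y → X, ball x₀ ε ⊆ D ∧ IsLocalInverseOnBalls f g x₀ ε η := by
  set e := hf.toOpenPartialHomeomorph f
  have hx₀ : x₀ ∈ e.source := hf.mem_toOpenPartialHomeomorph_source
  obtain ⟨ε, hε, hεD⟩ := Metric.mem_nhds_iff.mp (inter_mem (e.open_source.mem_nhds hx₀) hD)
  have hsymm : e.symm (f x₀) = x₀ := e.left_inv hx₀
  have hnhds : e.target ∩ e.symm ⁻¹' ball x₀ (ε / 2) ∈ 𝓝 (f x₀) := by
    refine inter_mem (e.open_target.mem_nhds (e.map_source hx₀)) ?_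
    refine (e.continuousAt_symm (e.map_source hx₀)).preimage_mem_nhds ?_
    exact isOpen_ball.mem_nhds (by simp [e, hsymm, hε])
  obtain ⟨η, hη, hηU⟩ := Metric.mem_nhds_iff.mp hnhds
  refine ⟨ε, η, e.symm, fun x hx => (hεD hx).2,
    ⟨hε, hη, fun x hx => e.left_inv (hεD hx).1, fun y hy => e.right_inv (hηU hy).1,
      fun y hy => (hηU hy).2, e.continuousOn_symm.mono fun y hy => (hηU hy).1⟩⟩

theorem HasStrictFDerivAt.hasDerivAt_of_eventuallyEq_comp {γ : ℝ → X} {c : ℝ → Y} {c' : Y}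
    {t : ℝ} (hf : HasStrictFDerivAt f (f' : X →L[ℝ] Y) (γ t)) (hγ : ContinuousAt γ t)
    (hfγ : f ∘ γ =ᶠ[𝓝 t] c) (hc : HasDerivAt c c' t) : HasDerivAt γ (f'.symm c') t := by
  refine (hf.to_localInverse.hasFDerivAt.comp_hasDerivAt_of_eq t hc
    hfγ.eq_of_nhds).congr_of_eventuallyEq ?_
  filter_upwards [hfγ, hγ.eventually hf.eventually_left_inverse] with s hs hinv
  rw [Function.comp_apply, ← hs, Function.comp_apply, hinv]

end LocalInverse

namespace AuxFlow

section NormedSpace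

variable {X Y : Type*} [NormedAddCommGroup X] [NormedSpace ℝ X]
  [NormedAddCommGroup Y] [NormedSpace ℝ Y] {f : X → Y} {x₀ : X}

section General

variable {D : Set X} (F : AuxFlow D f x₀)

theorem isOpen_setOf_mem_dom (x : X) : IsOpen {t : ℝ | (x, t) ∈ F.dom} :=
  F.isOpen_dom.preimage (Continuous.prodMk_right x)

theorem continuousAt_flow {x : X} {t : ℝ} (h : (x, t) ∈ F.dom) : ContinuousAt (F.flow x) t :=
  (F.continuousOn.continuousAt (F.isOpen_dom.mem_nhds h)).comp
    (Continuous.prodMk_right x).continuousAt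

theorem flow_flow_neg {x : X} {t : ℝ} (hx : x ∈ D) (h : (x, t) ∈ F.dom) :
    F.flow (F.flow x t) (-t) = x := by
  have h0 : (x, t + -t) ∈ F.dom := by rw [add_neg_cancel]; exact F.zero_mem x hx
  rw [(F.flow_add x t (-t) h h0).2, add_neg_cancel, F.flow_zero x hx]

theorem dist_flow_le_of_antitoneOn {x : X} (hx : x ∈ D)
    (hanti : AntitoneOn (fun t => dist (F.flow x t) x₀) {t | (x, t) ∈ F.dom}) {t : ℝ}
    (h : (x, t) ∈ F.dom) (ht : 0 ≤ t) : dist (F.flow x t) x₀ ≤ dist x x₀ := by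
  simpa [F.flow_zero x hx] using hanti (F.zero_mem x hx) h ht

theorem norm_map_flow_sub {x : X} {t : ℝ} (h : (x, t) ∈ F.dom) :
    ‖f (F.flow x t) - f x₀‖ = Real.exp (-t) * ‖f x - f x₀‖ := by
  rw [F.lifts _ h, add_sub_cancel_left, norm_smul, Real.norm_of_nonneg (Real.exp_pos _).le]

theorem norm_map_flow_sub_le {x : X} {t₁ t₂ : ℝ} (h₁ : (x, t₁) ∈ F.dom) (h₂ : (x, t₂) ∈ F.dom)
    (h₁₂ : t₁ ≤ t₂) : ‖f (F.flow x t₂) - f x₀‖ ≤ ‖f (F.flow x t₁) - f x₀‖ := by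
  rw [F.norm_map_flow_sub h₁, F.norm_map_flow_sub h₂]
  gcongr

theorem flow_mem_image_of_rightInverse {g : Y → X} {V : Set Y} (hV : StarConvex ℝ (f x₀) V)
    (hg : ContinuousOn g V) (hgV : ∀ y ∈ V, g y ∈ D ∧ f (g y) = y) {w : X} (hw : w ∈ D)
    (hgw : g (f w) = w) (hfw : f w ∈ V) {s : ℝ} (hs : 0 ≤ s) :
    (w, s) ∈ F.dom ∧ F.flow w s ∈ g '' V := by
  set c : ℝ → Y := fun s => f x₀ + Real.exp (-s) • (f w - f x₀)
  have hcV : ∀ s ∈ Ici (0 : ℝ), c s ∈ V := fun s hs =>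
    hV.add_smul_sub_mem hfw (Real.exp_pos _).le (Real.exp_le_one_iff.mpr (neg_nonpos.mpr hs))
  have hc : Continuous c := by fun_prop
  have hψ := F.maximal w hw (Ici 0) ordConnected_Ici self_mem_Ici (g ∘ c)
    (hg.comp hc.continuousOn hcV) (by simp [c, hgw]) (fun s hs => hgV _ (hcV s hs)) s hs
  exact ⟨hψ.1, hψ.2 ▸ mem_image_of_mem g (hcV s hs)⟩

theorem hasDerivAt_flow [CompleteSpace X] {f' : X → (X ≃L[ℝ] Y)}
    (hf : ∀ x ∈ D, HasStrictFDerivAt f (f' x : X →L[ℝ] Y) x) {x : X} {t : ℝ}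
    (h : (x, t) ∈ F.dom) :
    HasDerivAt (F.flow x) (-(f' (F.flow x t)).symm (f (F.flow x t) - f x₀)) t := by
  have hc : HasDerivAt (fun s => f x₀ + Real.exp (-s) • (f x - f x₀))
      (-(f (F.flow x t) - f x₀)) t := by
    rw [F.lifts _ h, add_sub_cancel_left, ← neg_smul]
    simpa using ((hasDerivAt_neg t).exp.smul_const (f x - f x₀)).const_add (f x₀)
  have hfγ : f ∘ F.flow x =ᶠ[𝓝 t] fun s => f x₀ + Real.exp (-s) • (f x - f x₀) := by
    filter_upwards [(F.isOpen_setOf_mem_dom x).mem_nhds h] with s hs using F.lifts _ hs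
  simpa using (hf _ (F.mem_of_dom _ h)).hasDerivAt_of_eventuallyEq_comp
    (F.continuousAt_flow h) hfγ hc

def entering (W : Set X) : Set X := {x | ∃ t, (x, t) ∈ F.dom ∧ F.flow x t ∈ W}

theorem isOpen_entering {W : Set X} (hW : IsOpen W) : IsOpen (F.entering W) := by
  convert isOpenMap_fst _ (F.continuousOn.isOpen_inter_preimage F.isOpen_dom hW) using 1
  ext x
  simp [entering]

end General

section Ball

variable {r₀ : ℝ} (F : AuxFlow (ball x₀ r₀) f x₀)

theorem mem_dom_of_antitoneOn
    (hc : ∀ B : Set X, IsClosed B → Bornology.IsBounded B → B ⊆ ball x₀ r₀ →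
      ∀ x ∈ B, (∀ t : ℝ, 0 ≤ t → (x, t) ∈ F.dom → F.flow x t ∈ B) →
        ∀ t : ℝ, 0 ≤ t → (x, t) ∈ F.dom)
    (hanti : ∀ x ∈ ball x₀ r₀,
      AntitoneOn (fun t => dist (F.flow x t) x₀) {t | (x, t) ∈ F.dom}) :
    ∀ x ∈ ball x₀ r₀, ∀ t : ℝ, 0 ≤ t → (x, t) ∈ F.dom := fun x hx =>
  hc (closedBall x₀ (dist x x₀)) isClosed_closedBall isBounded_closedBall
    (closedBall_subset_ball hx) x (mem_closedBall.mpr le_rfl)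
    fun _ ht h => F.dist_flow_le_of_antitoneOn hx (hanti x hx) h ht

theorem image_ball_starShaped
    (hanti : ∀ x ∈ ball x₀ r₀,
      AntitoneOn (fun t => dist (F.flow x t) x₀) {t | (x, t) ∈ F.dom})
    (hglob : ∀ x ∈ ball x₀ r₀, ∀ t : ℝ, 0 ≤ t → (x, t) ∈ F.dom) {r : ℝ} (hr : r ≤ r₀) :
    ∀ y ∈ f '' ball x₀ r, ∀ s ∈ Icc (0 : ℝ) 1, f x₀ + s • (y - f x₀) ∈ f '' ball x₀ r := by
  rintro _ ⟨w, hw, rfl⟩ s ⟨hs₀, hs₁⟩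
  rcases hs₀.eq_or_lt with rfl | hs
  · exact ⟨x₀, mem_ball_self (pos_of_mem_ball hw), by simp⟩
  have hwr₀ := ball_subset_ball hr hw
  have ht : 0 ≤ -Real.log s := neg_nonneg.mpr (Real.log_nonpos hs.le hs₁)
  have h := hglob w hwr₀ _ ht
  refine ⟨F.flow w (-Real.log s),
    (F.dist_flow_le_of_antitoneOn hwr₀ (hanti w hwr₀) h ht).trans_lt hw, ?_⟩
  rw [F.lifts _ h, neg_neg, Real.exp_log hs]

variable {g : Y → X} {ε η : ℝ}

theorem flow_mem_ball_half (hg : IsLocalInverseOnBalls f g x₀ ε η)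
    (hεr : ball x₀ ε ⊆ ball x₀ r₀) {w : X} (hw : w ∈ ball x₀ ε) (hfw : f w ∈ ball (f x₀) η)
    {s : ℝ} (hs : 0 ≤ s) : (w, s) ∈ F.dom ∧ F.flow w s ∈ ball x₀ (ε / 2) := by
  have hhalf : ball x₀ (ε / 2) ⊆ ball x₀ r₀ :=
    (ball_subset_ball (half_le_self hg.ε_pos.le)).trans hεr
  obtain ⟨hs, y, hy, hfl⟩ := F.flow_mem_image_of_rightInverse
    ((convex_ball _ _).starConvex (mem_ball_self hg.η_pos)) hg.continuousOn
    (fun y hy => ⟨hhalf (hg.mapsTo hy), hg.right_inv y hy⟩) (hεr hw) (hg.left_inv w hw) hfw hs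
  exact ⟨hs, hfl ▸ hg.mapsTo hy⟩

theorem eventually_flow_mem_ball_half (hg : IsLocalInverseOnBalls f g x₀ ε η)
    (hεr : ball x₀ ε ⊆ ball x₀ r₀)
    (hglob : ∀ x ∈ ball x₀ r₀, ∀ t : ℝ, 0 ≤ t → (x, t) ∈ F.dom) {x : X} (hx : x ∈ ball x₀ r₀)
    (hxW : x ∈ F.entering (ball x₀ ε ∩ f ⁻¹' ball (f x₀) η)) :
    ∀ᶠ t in atTop, F.flow x t ∈ ball x₀ (ε / 2) := by
  obtain ⟨t₀, ht₀, hW⟩ := hxW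
  filter_upwards [eventually_ge_atTop (max t₀ 0)] with t ht
  have h := F.flow_add x t₀ (t - t₀) ht₀
    (by rw [add_sub_cancel]; exact hglob x hx t (le_of_max_le_right ht))
  rw [← add_sub_cancel t₀ t, ← h.2]
  exact (F.flow_mem_ball_half hg hεr hW.1 hW.2 (sub_nonneg.mpr (le_of_max_le_left ht))).2

/-- The sphere of radius `ε / 2` is a barrier: a point of it whose image lies in
`ball (f x₀) η` is fixed by `g`, which maps into `ball x₀ (ε / 2)`. -/
theorem notMem_entering_of_lt_dist (hg : IsLocalInverseOnBalls f g x₀ ε η)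
    (hεr : ball x₀ ε ⊆ ball x₀ r₀)
    (hglob : ∀ x ∈ ball x₀ r₀, ∀ t : ℝ, 0 ≤ t → (x, t) ∈ F.dom) {y : X} (hy : y ∈ ball x₀ r₀)
    {T : ℝ} (hT : 0 ≤ T) (hfT : f (F.flow y T) ∈ ball (f x₀) η)
    (hdT : ε / 2 < dist (F.flow y T) x₀) :
    y ∉ F.entering (ball x₀ ε ∩ f ⁻¹' ball (f x₀) η) := by
  intro hyW
  obtain ⟨t, ht, hdt⟩ :=
    ((eventually_ge_atTop T).and (F.eventually_flow_mem_ball_half hg hεr hglob hy hyW)).exists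
  have hcont : ContinuousOn (fun s => dist (F.flow y s) x₀) (Icc T t) := fun s hs =>
    ContinuousAt.continuousWithinAt <|
      (F.continuousAt_flow (hglob y hy s (hT.trans hs.1))).dist continuousAt_const
  obtain ⟨σ, hσ, hdσ : dist (F.flow y σ) x₀ = ε / 2⟩ :=
    intermediate_value_Icc' ht hcont ⟨(mem_ball.mp hdt).le, hdT.le⟩
  have hfσ : f (F.flow y σ) ∈ ball (f x₀) η := by
    rw [mem_ball, dist_eq_norm] at hfT ⊢
    exact (F.norm_map_flow_sub_le (hglob y hy T hT) (hglob y hy σ (hT.trans hσ.1))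
      hσ.1).trans_lt hfT
  have hσε : F.flow y σ ∈ ball x₀ ε := by
    rw [mem_ball, hdσ]
    exact half_lt_self hg.ε_pos
  have hgσ := hg.mapsTo hfσ
  rw [hg.left_inv _ hσε, mem_ball, hdσ] at hgσ
  exact lt_irrefl _ hgσ

theorem closure_entering_inter_ball_subset (hg : IsLocalInverseOnBalls f g x₀ ε η)
    (hεr : ball x₀ ε ⊆ ball x₀ r₀)
    (hglob : ∀ x ∈ ball x₀ r₀, ∀ t : ℝ, 0 ≤ t → (x, t) ∈ F.dom)
    (hfc : ContinuousOn f (ball x₀ r₀)) :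
    closure (F.entering (ball x₀ ε ∩ f ⁻¹' ball (f x₀) η)) ∩ ball x₀ r₀ ⊆
      F.entering (ball x₀ ε ∩ f ⁻¹' ball (f x₀) η) := by
  rintro x ⟨hxcl, hx⟩
  by_contra hxW
  have hlim : Tendsto (fun t => Real.exp (-t) * ‖f x - f x₀‖) atTop (𝓝 0) := by
    simpa using Real.tendsto_exp_neg_atTop_nhds_zero.mul_const ‖f x - f x₀‖
  obtain ⟨T, hT, hηT⟩ :=
    ((eventually_ge_atTop 0).and (hlim.eventually (gt_mem_nhds hg.η_pos))).exists
  have hxT := hglob x hx T hT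
  have hfT : f (F.flow x T) ∈ ball (f x₀) η := by
    rwa [mem_ball, dist_eq_norm, F.norm_map_flow_sub hxT]
  have hdT : ε / 2 < dist (F.flow x T) x₀ := by
    by_contra! h
    exact hxW ⟨T, hxT, mem_ball.mpr (h.trans_lt (half_lt_self hg.ε_pos)), hfT⟩
  have hcont : ContinuousAt (fun y => F.flow y T) x := by
    have h := F.continuousOn.continuousAt (F.isOpen_dom.mem_nhds hxT)
    exact h.comp (x := x) (Continuous.prodMk_left T).continuousAt
  have hdom_near : ∀ᶠ y in 𝓝 x, (y, T) ∈ F.dom :=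
    (F.isOpen_dom.preimage (Continuous.prodMk_left T)).mem_nhds hxT
  have hfT_near : ∀ᶠ y in 𝓝 x, f (F.flow y T) ∈ ball (f x₀) η :=
    ((hfc.continuousAt (isOpen_ball.mem_nhds (F.mem_of_dom (x, T) hxT))).comp (x := x)
      hcont).eventually_mem (isOpen_ball.mem_nhds hfT)
  have hdT_near : ∀ᶠ y in 𝓝 x, ε / 2 < dist (F.flow y T) x₀ :=
    (hcont.dist (tendsto_const_nhds (x := x₀))).eventually_const_lt hdT
  obtain ⟨y, hyW, hyT, hfyT, hdyT⟩ := ((mem_closure_iff_frequently.mp hxcl).and_eventually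
    (hdom_near.and (hfT_near.and hdT_near))).exists
  exact F.notMem_entering_of_lt_dist hg hεr hglob (F.dom_subset _ hyT) hT hfyT hdyT hyW

theorem ball_subset_entering (hg : IsLocalInverseOnBalls f g x₀ ε η)
    (hεr : ball x₀ ε ⊆ ball x₀ r₀)
    (hglob : ∀ x ∈ ball x₀ r₀, ∀ t : ℝ, 0 ≤ t → (x, t) ∈ F.dom)
    (hfc : ContinuousOn f (ball x₀ r₀)) (hx₀ : x₀ ∈ ball x₀ r₀) :
    ball x₀ r₀ ⊆ F.entering (ball x₀ ε ∩ f ⁻¹' ball (f x₀) η) := by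
  have hW : IsOpen (ball x₀ ε ∩ f ⁻¹' ball (f x₀) η) :=
    (hfc.mono hεr).isOpen_inter_preimage isOpen_ball isOpen_ball
  have hx₀W : x₀ ∈ F.entering (ball x₀ ε ∩ f ⁻¹' ball (f x₀) η) :=
    ⟨0, F.zero_mem x₀ hx₀, by
      rw [F.flow_zero x₀ hx₀]
      exact ⟨mem_ball_self hg.ε_pos, mem_ball_self hg.η_pos⟩⟩
  exact (convex_ball x₀ r₀).isPreconnected.subset_of_closure_inter_subset
    (F.isOpen_entering hW) ⟨x₀, hx₀, hx₀W⟩ (F.closure_entering_inter_ball_subset hg hεr hglob hfc)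

theorem injOn_ball [CompleteSpace X] {f' : X → (X ≃L[ℝ] Y)}
    (hf : ∀ x ∈ ball x₀ r₀, HasStrictFDerivAt f (f' x : X →L[ℝ] Y) x)
    (hglob : ∀ x ∈ ball x₀ r₀, ∀ t : ℝ, 0 ≤ t → (x, t) ∈ F.dom) :
    InjOn f (ball x₀ r₀) := by
  intro x₁ hx₁ x₂ hx₂ h₁₂
  have hx₀ : x₀ ∈ ball x₀ r₀ := mem_ball_self (pos_of_mem_ball hx₁)
  have hfc : ContinuousOn f (ball x₀ r₀) := fun x hx =>
    (hf x hx).continuousAt.continuousWithinAt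
  obtain ⟨ε, η, g, hεr, hg⟩ :=
    (hf x₀ hx₀).exists_isLocalInverseOnBalls (isOpen_ball.mem_nhds hx₀)
  have hU := F.ball_subset_entering hg hεr hglob hfc hx₀
  obtain ⟨T, hT, h₁, h₂⟩ := ((eventually_ge_atTop 0).and
    ((F.eventually_flow_mem_ball_half hg hεr hglob hx₁ (hU hx₁)).and
      (F.eventually_flow_mem_ball_half hg hεr hglob hx₂ (hU hx₂)))).exists
  have hd₁ := hglob x₁ hx₁ T hT
  have hd₂ := hglob x₂ hx₂ T hT
  have hhalf := ball_subset_ball (x := x₀) (half_le_self hg.ε_pos.le)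
  have hT₁₂ : F.flow x₁ T = F.flow x₂ T := calc
    F.flow x₁ T = g (f (F.flow x₁ T)) := (hg.left_inv _ (hhalf h₁)).symm
    _ = g (f (F.flow x₂ T)) := by rw [F.lifts _ hd₁, F.lifts _ hd₂, h₁₂]
    _ = F.flow x₂ T := hg.left_inv _ (hhalf h₂)
  rw [← F.flow_flow_neg hx₁ hd₁, hT₁₂, F.flow_flow_neg hx₂ hd₂]

end Ball

end NormedSpace

theorem antitoneOn_dist_flow {X Y : Type*} [NormedAddCommGroup X] [InnerProductSpace ℝ X]
    [CompleteSpace X] [NormedAddCommGroup Y] [NormedSpace ℝ Y] {f : X → Y}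
    {f' : X → (X ≃L[ℝ] Y)} {x₀ : X} {D : Set X} (F : AuxFlow D f x₀)
    (hf : ∀ x ∈ D, HasStrictFDerivAt f (f' x : X →L[ℝ] Y) x)
    (hb : ∀ z ∈ D, 0 ≤ inner ℝ (z - x₀) ((f' z).symm (f z - f x₀))) {x : X} (hx : x ∈ D) :
    AntitoneOn (fun t => dist (F.flow x t) x₀) {t | (x, t) ∈ F.dom} := by
  have hder : ∀ t ∈ {t | (x, t) ∈ F.dom}, HasDerivAt (fun t => ‖F.flow x t - x₀‖ ^ 2)
      (2 * inner ℝ (F.flow x t - x₀) (-(f' (F.flow x t)).symm (f (F.flow x t) - f x₀))) t :=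
    fun t ht => ((F.hasDerivAt_flow hf ht).sub_const x₀).norm_sq
  have hsq : AntitoneOn (fun t => ‖F.flow x t - x₀‖ ^ 2) {t | (x, t) ∈ F.dom} := by
    refine antitoneOn_of_hasDerivWithinAt_nonpos
      (convex_iff_ordConnected.mpr (F.interval x hx))
      (fun t ht => (hder t ht).continuousAt.continuousWithinAt)
      (fun t ht => (hder t (interior_subset ht)).hasDerivWithinAt) fun t ht => ?_
    rw [(F.isOpen_setOf_mem_dom x).interior_eq] at ht
    have := hb _ (F.mem_of_dom _ ht)
    rw [inner_neg_right]
    linarith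
  intro a ha b hb hab
  simpa only [dist_eq_norm] using
    (pow_le_pow_iff_left₀ (norm_nonneg _) (norm_nonneg _) two_ne_zero).mp (hsq ha hb hab)

end AuxFlow

section StarShapedImage

variable {X Y : Type*} [NormedAddCommGroup X] [NormedAddCommGroup Y] [NormedSpace ℝ Y]
  {f : X → Y} {x₀ : X} {r₀ : ℝ}

theorem dist_le_of_injOn_of_starShaped (hinj : InjOn f (ball x₀ r₀))
    (hstar : ∀ r : ℝ, 0 < r → r ≤ r₀ →
      ∀ y ∈ f '' ball x₀ r, ∀ s ∈ Icc (0 : ℝ) 1, f x₀ + s • (y - f x₀) ∈ f '' ball x₀ r)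
    {x z : X} (hx : x ∈ ball x₀ r₀) (hz : z ∈ ball x₀ r₀) {s : ℝ} (hs : s ∈ Icc (0 : ℝ) 1)
    (hfz : f z = f x₀ + s • (f x - f x₀)) : dist z x₀ ≤ dist x x₀ := by
  refine le_of_forall_gt_imp_ge_of_dense fun a ha => ?_
  have hxr : x ∈ ball x₀ (min a r₀) := lt_min ha hx
  obtain ⟨w, hw, hfw⟩ :=
    hstar _ (pos_of_mem_ball hxr) (min_le_right _ _) _ ⟨x, hxr, rfl⟩ s hs
  have hzw : z = w := hinj hz (ball_subset_ball (min_le_right _ _) hw) (hfz.trans hfw.symm)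
  exact (hzw ▸ hw : z ∈ ball x₀ (min a r₀)).le.trans (min_le_left _ _)

theorem inner_nonneg_of_injOn_of_starShaped [InnerProductSpace ℝ X] [CompleteSpace X]
    {f' : X → (X ≃L[ℝ] Y)} (hf : ∀ x ∈ ball x₀ r₀, HasStrictFDerivAt f (f' x : X →L[ℝ] Y) x)
    (hinj : InjOn f (ball x₀ r₀))
    (hstar : ∀ r : ℝ, 0 < r → r ≤ r₀ →
      ∀ y ∈ f '' ball x₀ r, ∀ s ∈ Icc (0 : ℝ) 1, f x₀ + s • (y - f x₀) ∈ f '' ball x₀ r)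
    {x : X} (hx : x ∈ ball x₀ r₀) :
    0 ≤ inner ℝ (x - x₀) ((f' x).symm (f x - f x₀)) := by
  have hsx := hf x hx
  set c : ℝ → Y := fun s => f x₀ + s • (f x - f x₀)
  have hc1 : c 1 = f x := by simp [c]
  have hc : HasDerivAt c (f x - f x₀) 1 := by
    simpa [c] using ((hasDerivAt_id (1 : ℝ)).smul_const (f x - f x₀)).const_add (f x₀)
  set z := hsx.localInverse f (f' x) x ∘ c
  have hz : HasDerivAt z ((f' x).symm (f x - f x₀)) 1 :=
    hsx.to_localInverse.hasFDerivAt.comp_hasDerivAt_of_eq 1 hc hc1.symm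
  have hz1 : z 1 = x := by
    simp only [z, Function.comp_apply, hc1]
    exact hsx.localInverse_apply_image
  have hct : Tendsto c (𝓝 1) (𝓝 (f x)) := hc1 ▸ hc.continuousAt
  have hnear : ∀ᶠ s in 𝓝 1, z s ∈ ball x₀ r₀ ∧ f (z s) = c s ∧ 0 < s :=
    (hz.continuousAt.eventually_mem (hz1 ▸ isOpen_ball.mem_nhds hx)).and
      ((hct.eventually hsx.eventually_right_inverse).and (Ioi_mem_nhds one_pos))
  have hle : ∀ᶠ s in 𝓝[<] 1, ‖z s - x₀‖ ^ 2 ≤ ‖z 1 - x₀‖ ^ 2 := by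
    filter_upwards [nhdsWithin_le_nhds hnear, self_mem_nhdsWithin] with s ⟨hzs, hfs, hs₀⟩ hs₁
    rw [hz1, ← dist_eq_norm, ← dist_eq_norm]
    gcongr
    exact dist_le_of_injOn_of_starShaped hinj hstar hx hzs ⟨hs₀.le, le_of_lt hs₁⟩ hfs
  have h := (hz.sub_const x₀).norm_sq.nonneg_of_eventually_nhdsLT_le hle
  rw [hz1] at h
  linarith

end StarShapedImage

theorem ball_injectivity_criterion_general {X Y : Type*}
    [NormedAddCommGroup X] [InnerProductSpace ℝ X] [CompleteSpace X]
    [NormedAddCommGroup Y] [NormedSpace ℝ Y]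
    (x₀ : X) (r₀ : ℝ)
    (f : X → Y) (f' : X → (X ≃L[ℝ] Y))
    (hdf : ∀ x ∈ Metric.ball x₀ r₀, HasFDerivAt f (f' x : X →L[ℝ] Y) x)
    (hC1 : ContinuousOn (fun x : X => ((f' x : X →L[ℝ] Y))) (Metric.ball x₀ r₀))
    (F : AuxFlow (Metric.ball x₀ r₀) f x₀)
    (hc : ∀ B : Set X, IsClosed B → Bornology.IsBounded B → B ⊆ Metric.ball x₀ r₀ →
      ∀ x ∈ B, (∀ t : ℝ, 0 ≤ t → (x, t) ∈ F.dom → F.flow x t ∈ B) →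
        ∀ t : ℝ, 0 ≤ t → (x, t) ∈ F.dom) :
    (Set.InjOn f (Metric.ball x₀ r₀) ∧
      ∀ r : ℝ, 0 < r → r ≤ r₀ →
        ∀ y ∈ f '' Metric.ball x₀ r, ∀ s ∈ Set.Icc (0 : ℝ) 1,
          f x₀ + s • (y - f x₀) ∈ f '' Metric.ball x₀ r) ↔
    ∀ x ∈ Metric.ball x₀ r₀,
      (0 : ℝ) ≤ inner ℝ (x - x₀) ((f' x).symm (f x - f x₀)) := by
  have hf : ∀ x ∈ ball x₀ r₀, HasStrictFDerivAt f (f' x : X →L[ℝ] Y) x := fun x hx =>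
    hasStrictFDerivAt_of_hasFDerivAt_of_continuousAt
      (eventually_of_mem (isOpen_ball.mem_nhds hx) hdf)
      (hC1.continuousAt (isOpen_ball.mem_nhds hx))
  refine ⟨fun ⟨hinj, hstar⟩ x hx => inner_nonneg_of_injOn_of_starShaped hf hinj hstar hx,
    fun hb => ?_⟩
  have hanti := fun x (hx : x ∈ ball x₀ r₀) => F.antitoneOn_dist_flow hf hb hx
  have hglob := F.mem_dom_of_antitoneOn hc hanti
  exact ⟨F.injOn_ball hf hglob, fun r _ hr => F.image_ball_starShaped hanti hglob hr⟩

/-- Criterion of injectivity on a ball (Proposition 2.5): for a `C¹` local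
diffeomorphism `f` on a ball `B(x₀;r₀)` of a Hilbert space, satisfying condition (c)
for the auxiliary flow, the following are equivalent:
(a) `f` is injective on `B(x₀;r₀)` and `f(B(x₀;r))` is star-shaped with respect to
`f(x₀)` for every `0 < r ≤ r₀`;
(b) `⟨x - x₀, f'(x)⁻¹(f(x) - f(x₀))⟩ ≥ 0` for all `x ∈ B(x₀;r₀)`. -/
theorem ball_injectivity_criterion {X Y : Type*}
    [NormedAddCommGroup X] [InnerProductSpace ℝ X] [CompleteSpace X]
    [NormedAddCommGroup Y] [NormedSpace ℝ Y] [CompleteSpace Y]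
    (x₀ : X) (r₀ : ℝ) (hr₀ : 0 < r₀)
    (f : X → Y) (f' : X → (X ≃L[ℝ] Y))
    (hdf : ∀ x ∈ Metric.ball x₀ r₀, HasFDerivAt f (f' x : X →L[ℝ] Y) x)
    (hC1 : ContinuousOn (fun x : X => ((f' x : X →L[ℝ] Y))) (Metric.ball x₀ r₀))
    (F : AuxFlow (Metric.ball x₀ r₀) f x₀)
    (hc : ∀ B : Set X, IsClosed B → Bornology.IsBounded B → B ⊆ Metric.ball x₀ r₀ →
      ∀ x ∈ B, (∀ t : ℝ, 0 ≤ t → (x, t) ∈ F.dom → F.flow x t ∈ B) →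
        ∀ t : ℝ, 0 ≤ t → (x, t) ∈ F.dom) :
    (Set.InjOn f (Metric.ball x₀ r₀) ∧
      ∀ r : ℝ, 0 < r → r ≤ r₀ →
        ∀ y ∈ f '' Metric.ball x₀ r, ∀ s ∈ Set.Icc (0 : ℝ) 1,
          f x₀ + s • (y - f x₀) ∈ f '' Metric.ball x₀ r) ↔
    ∀ x ∈ Metric.ball x₀ r₀,
      (0 : ℝ) ≤ inner ℝ (x - x₀) ((f' x).symm (f x - f x₀)) :=
  ball_injectivity_criterion_general x₀ r₀ f f' hdf hC1 F hc
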